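/- For every real α > 0 and every complex s with Re(s) > 0, one has ∫_0^∞ erfc(α·t)·t^{s−1} dt = α^{−s}·Γ((s+1)/2) / (√π · s), the integral converging absolutely, where Γ denotes the Gamma function. -/

import Mathlib

/-!
Writing `erfc t = (2/√π) ∫_t^∞ e^{-r²} dr`, Fubini turns the Mellin transform of a tail integral
`t ↦ ∫_t^∞ f` at `s` into `1/s` times the Mellin transform of `f` at `s + 1`, since
`∫_0^r t^{s-1} dt = r^s / s`. The substitution `r ↦ r²` gives `Γ((s+1)/2)/2` for the Mellin
transform of `e^{-r²}` at `s + 1`, and replacing `t` by `α t` multiplies a Mellin transform by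
`α^{-s}`.
-/

open MeasureTheory Filter Set

noncomputable section

/-- The complementary error function `erfc(x) = (2/√π)∫_x^∞ e^{-r²} dr`. -/
def erfc (x : ℝ) : ℝ := (2 / Real.sqrt Real.pi) * ∫ r in Set.Ioi x, Real.exp (-(r ^ 2))

theorem integral_Ioo_ofReal_cpow_sub_one {s : ℂ} (hs : 0 < s.re) {r : ℝ} (hr : 0 ≤ r) :
    ∫ t in Ioo 0 r, (t : ℂ) ^ (s - 1) = (r : ℂ) ^ s / s := by
  have hs' : -1 < (s - 1).re := by simp [hs]
  rw [← integral_Ioc_eq_integral_Ioo, ← intervalIntegral.integral_of_le hr,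
    integral_cpow (Or.inl hs'), sub_add_cancel, Complex.ofReal_zero,
    Complex.zero_cpow (by rintro rfl; simp at hs), sub_zero]

theorem integral_Ioo_rpow_sub_one {σ : ℝ} (hσ : 0 < σ) {r : ℝ} (hr : 0 ≤ r) :
    ∫ t in Ioo 0 r, t ^ (σ - 1) = r ^ σ / σ := by
  rw [← integral_Ioc_eq_integral_Ioo, ← intervalIntegral.integral_of_le hr,
    integral_rpow (Or.inl (by linarith)), sub_add_cancel, Real.zero_rpow hσ.ne', sub_zero]

section Mellin

variable {E : Type*} [NormedAddCommGroup E] [NormedSpace ℂ E]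

theorem MellinConvergent.aestronglyMeasurable {f : ℝ → E} {s : ℂ} (hf : MellinConvergent f s) :
    AEStronglyMeasurable f (volume.restrict (Ioi 0)) := by
  have hpow : ContinuousOn (fun t : ℝ => (t : ℂ) ^ (1 - s)) (Ioi 0) := fun t ht =>
    (Complex.continuousAt_ofReal_cpow_const _ _ (Or.inr (ne_of_gt ht))).continuousWithinAt
  refine ((hpow.aestronglyMeasurable measurableSet_Ioi).smul
    (Integrable.aestronglyMeasurable hf)).congr ?_
  filter_upwards [ae_restrict_mem measurableSet_Ioi] with t ht
  have ht0 : (t : ℂ) ≠ 0 := Complex.ofReal_ne_zero.2 (ne_of_gt ht)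
  rw [Pi.smul_apply', smul_smul, ← Complex.cpow_add _ _ ht0, sub_add_sub_cancel, sub_self,
    Complex.cpow_zero, one_smul]

theorem HasMellin.comp_mul_left {f : ℝ → E} {s : ℂ} {m : E} (hf : HasMellin f s m) {a : ℝ}
    (ha : 0 < a) : HasMellin (fun t => f (a * t)) s ((a : ℂ) ^ (-s) • m) :=
  ⟨(MellinConvergent.comp_mul_left ha).2 hf.1, by rw [mellin_comp_mul_left f s ha, hf.2]⟩

variable [CompleteSpace E]

theorem hasMellin_integral_Ioi {f : ℝ → E} {s : ℂ} (hs : 0 < s.re)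
    (hf : MellinConvergent f (s + 1)) :
    HasMellin (fun t => ∫ r in Ioi t, f r) s ((1 / s) • mellin f (s + 1)) := by
  set μ := volume.restrict (Ioi (0 : ℝ))
  set F : ℝ × ℝ → E := {p | p.1 < p.2}.indicator fun p => (p.1 : ℂ) ^ (s - 1) • f p.2
  have hF_fst : ∀ r, (fun t => F (t, r)) = (Iio r).indicator fun t => (t : ℂ) ^ (s - 1) • f r :=
    fun r => rfl
  have hF_snd : ∀ t, (fun r => F (t, r)) = (Ioi t).indicator fun r => (t : ℂ) ^ (s - 1) • f r :=
    fun t => rfl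
  have hF_meas : AEStronglyMeasurable F (μ.prod μ) := by
    refine AEStronglyMeasurable.indicator ?_ (measurableSet_lt measurable_fst measurable_snd)
    exact (by fun_prop : Measurable fun p : ℝ × ℝ => (p.1 : ℂ) ^ (s - 1)).aestronglyMeasurable.smul
      (hf.aestronglyMeasurable.comp_quasiMeasurePreserving Measure.quasiMeasurePreserving_snd)
  have hF_int_fst : ∀ r ∈ Ioi (0 : ℝ), Integrable (fun t => F (t, r)) μ := fun r hr => by
    rw [hF_fst, integrable_indicator_iff measurableSet_Iio, IntegrableOn,
      Measure.restrict_restrict measurableSet_Iio, Iio_inter_Ioi]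
    exact ((intervalIntegral.integrableOn_Ioo_cpow_iff hr).2 (by simp [hs])).smul_const (f r)
  have hF_fst_eq : ∀ r ∈ Ioi (0 : ℝ), ∫ t, F (t, r) ∂μ = ((r : ℂ) ^ s / s) • f r := fun r hr => by
    rw [hF_fst, integral_indicator measurableSet_Iio, Measure.restrict_restrict measurableSet_Iio,
      Iio_inter_Ioi, integral_smul_const, integral_Ioo_ofReal_cpow_sub_one hs (le_of_lt hr)]
  have hF_fst_norm : ∀ r ∈ Ioi (0 : ℝ), ∫ t, ‖F (t, r)‖ ∂μ = r ^ s.re / s.re * ‖f r‖ :=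
    fun r hr => by
    rw [show (fun t => ‖F (t, r)‖) = (Iio r).indicator fun t => ‖(t : ℂ) ^ (s - 1) • f r‖ from
      funext fun t => norm_indicator_eq_indicator_norm .., integral_indicator measurableSet_Iio,
      Measure.restrict_restrict measurableSet_Iio, Iio_inter_Ioi,
      ← integral_Ioo_rpow_sub_one hs (le_of_lt hr), ← integral_mul_const]
    refine setIntegral_congr_fun measurableSet_Ioo fun t ht => ?_
    rw [norm_smul, Complex.norm_cpow_eq_rpow_re_of_pos ht.1, Complex.sub_re, Complex.one_re]
  have hF_snd_eq : ∀ t ∈ Ioi (0 : ℝ), ∫ r, F (t, r) ∂μ = (t : ℂ) ^ (s - 1) • ∫ r in Ioi t, f r :=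
    fun t ht => by
    rw [hF_snd, integral_indicator measurableSet_Ioi, Measure.restrict_restrict measurableSet_Ioi,
      inter_eq_self_of_subset_left (Ioi_subset_Ioi (le_of_lt ht)), integral_smul]
  have hF : Integrable F (μ.prod μ) := by
    refine (integrable_prod_iff' hF_meas).2 ⟨?_, ?_⟩
    · filter_upwards [ae_restrict_mem measurableSet_Ioi] with r hr using hF_int_fst r hr
    · have hnorm := (mellin_convergent_iff_norm subset_rfl measurableSet_Ioi
        hf.aestronglyMeasurable).1 hf
      refine IntegrableOn.congr_fun (hnorm.div_const s.re) (fun r hr => ?_) measurableSet_Ioi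
      rw [hF_fst_norm r hr]
      simp only [Complex.add_re, Complex.one_re, add_sub_cancel_right]
      ring
  refine ⟨hF.integral_prod_left.congr ?_, ?_⟩
  · filter_upwards [ae_restrict_mem measurableSet_Ioi] with t ht using hF_snd_eq t ht
  · calc mellin (fun t => ∫ r in Ioi t, f r) s = ∫ t, ∫ r, F (t, r) ∂μ ∂μ :=
          setIntegral_congr_fun measurableSet_Ioi fun t ht => (hF_snd_eq t ht).symm
      _ = ∫ r, ∫ t, F (t, r) ∂μ ∂μ := integral_integral_swap hF
      _ = ∫ r : ℝ in Ioi 0, (1 / s) • ((r : ℂ) ^ (s + 1 - 1) • f r) :=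
          setIntegral_congr_fun measurableSet_Ioi fun r hr => by
            rw [hF_fst_eq r hr, add_sub_cancel_right, smul_smul, div_eq_mul_one_div, mul_comm]
      _ = (1 / s) • mellin f (s + 1) := integral_smul _ _

end Mellin

theorem hasMellin_exp_neg {s : ℂ} (hs : 0 < s.re) :
    HasMellin (fun t : ℝ => (Real.exp (-t) : ℂ)) s (Complex.Gamma s) := by
  refine ⟨?_, by rw [Complex.Gamma_eq_integral hs, Complex.GammaIntegral_eq_mellin]⟩
  refine (Complex.GammaIntegral_convergent hs).congr_fun (fun t _ => ?_) measurableSet_Ioi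
  exact mul_comm _ _

theorem hasMellin_exp_neg_sq {s : ℂ} (hs : 0 < s.re) :
    HasMellin (fun t : ℝ => (Real.exp (-t ^ 2) : ℂ)) s (Complex.Gamma (s / 2) / 2) := by
  have hsq : (fun t : ℝ => (Real.exp (-t ^ 2) : ℂ)) = fun t => (Real.exp (-t ^ (2 : ℝ)) : ℂ) := by
    simp_rw [Real.rpow_two]
  have h := hasMellin_exp_neg (s := s / 2) (by simpa using hs)
  rw [hsq]
  refine ⟨(MellinConvergent.comp_rpow two_ne_zero).2 h.1, ?_⟩
  rw [mellin_comp_rpow (fun t : ℝ => (Real.exp (-t) : ℂ)), Complex.ofReal_ofNat, h.2, abs_two,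
    Complex.real_smul]
  push_cast
  ring

theorem ofReal_erfc (x : ℝ) :
    (erfc x : ℂ) = (2 / Real.sqrt Real.pi : ℂ) * ∫ r in Ioi x, (Real.exp (-r ^ 2) : ℂ) := by
  rw [erfc, Complex.ofReal_mul, ← integral_complex_ofReal, Complex.ofReal_div, Complex.ofReal_ofNat]

theorem hasMellin_erfc {s : ℂ} (hs : 0 < s.re) :
    HasMellin (fun t => (erfc t : ℂ)) s
      (Complex.Gamma ((s + 1) / 2) / ((Real.sqrt Real.pi : ℂ) * s)) := by
  have hgauss := hasMellin_exp_neg_sq (s := s + 1)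
    (by simp only [Complex.add_re, Complex.one_re]; linarith)
  have htail := hasMellin_integral_Ioi hs hgauss.1
  have herfc := hasMellin_const_smul htail.1 (2 / Real.sqrt Real.pi : ℂ)
  simp only [smul_eq_mul, ← ofReal_erfc] at herfc
  refine ⟨herfc.1, herfc.2.trans ?_⟩
  rw [htail.2, hgauss.2, smul_eq_mul]
  have hπ : (Real.sqrt Real.pi : ℂ) ≠ 0 := by
    exact_mod_cast (Real.sqrt_pos.2 Real.pi_pos).ne'
  have hs0 : s ≠ 0 := by rintro rfl; simp at hs
  field_simp

/-- `∫_0^∞ erfc(αt)·t^{s-1} dt = α^{-s}·Γ((s+1)/2)/(√π·s)` for `α > 0`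
and `Re s > 0`, the integral converging absolutely. Here `α^{-s} = exp(-s·log α)`. -/
theorem stmt12 (α : ℝ) (hα : 0 < α) (s : ℂ) (hs : 0 < s.re) :
    IntegrableOn (fun t : ℝ => (erfc (α * t) : ℂ) * (t : ℂ) ^ (s - 1)) (Set.Ioi 0) ∧
    (∫ t in Set.Ioi (0 : ℝ), (erfc (α * t) : ℂ) * (t : ℂ) ^ (s - 1)) =
      Complex.exp (-s * (Real.log α : ℂ)) * Complex.Gamma ((s + 1) / 2) /
        ((Real.sqrt Real.pi : ℂ) * s) := by
  obtain ⟨hconv, hval⟩ := (hasMellin_erfc hs).comp_mul_left hα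
  simp only [MellinConvergent, mellin, smul_eq_mul, mul_comm _ ((erfc _ : ℂ))] at hconv hval
  refine ⟨hconv, ?_⟩
  rw [hval, Complex.cpow_def_of_ne_zero (Complex.ofReal_ne_zero.2 hα.ne'),
    ← Complex.ofReal_log hα.le]
  ring_nf

end
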